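/- (Validity of ⊗-elimination) For all finite multisets Γ, Δ of IMLL formulas and all IMLL formulas φ, ψ, χ: if Γ ⊩ φ ⊗ ψ and Δ ⨾ φ ⨾ ψ ⊩ χ, then Γ ⨾ Δ ⊩ χ. -/

import Mathlib

/-- Formulas of intuitionistic multiplicative linear logic over a
countably infinite set of atoms (here: `ℕ`). -/
inductive MForm : Type where
  | atom : ℕ → MForm
  | tensor : MForm → MForm → MForm
  | unit : MForm
  | limp : MForm → MForm → MForm
deriving DecidableEq

/-- An atomic rule `(P₁ ▷ p₁, …, Pₙ ▷ pₙ) ⇒ p`: a (possibly empty) finite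
set of atomic sequents together with a conclusion atom. -/
structure MRule : Type where
  prems : Finset (Multiset ℕ × ℕ)
  concl : ℕ

/-- A base is a set of atomic rules. -/
abbrev MBase := Set MRule

/-- Derivability in a base `B`: `P ⊢_B p`. -/
inductive MDer (B : MBase) : Multiset ℕ → ℕ → Prop where
  | ref (p : ℕ) : MDer B {p} p
  | app {r : MRule} (hr : r ∈ B) (S : Multiset ℕ × ℕ → Multiset ℕ)
      (h : ∀ pr ∈ r.prems, MDer B (S pr + pr.1) pr.2) :
      MDer B (r.prems.sum S) r.concl

/-- The resource-indexed support relation `⊩_B^P φ`. -/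
def MSupp : MForm → MBase → Multiset ℕ → Prop
  | .atom p, B, P => MDer B P p
  | .tensor φ ψ, B, P => ∀ X : MBase, B ⊆ X → ∀ U : Multiset ℕ, ∀ p : ℕ,
      (∀ Y : MBase, X ⊆ Y → ∀ V : Multiset ℕ,
        (∃ V₁ V₂ : Multiset ℕ, V = V₁ + V₂ ∧ MSupp φ Y V₁ ∧ MSupp ψ Y V₂) →
        MDer Y (U + V) p) →
      MDer X (P + U) p
  | .unit, B, P => ∀ X : MBase, B ⊆ X → ∀ U : Multiset ℕ, ∀ p : ℕ,
      MDer X U p → MDer X (P + U) p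
  | .limp φ ψ, B, P => ∀ X : MBase, B ⊆ X → ∀ U : Multiset ℕ,
      MSupp φ X U → MSupp ψ X (P + U)

/-- Support of a multiset of formulas: `⊩_B^P Γ`, obtained by splitting
the resources `P` among the members of `Γ`. -/
inductive MSuppCtx (B : MBase) : Multiset ℕ → Multiset MForm → Prop where
  | nil : MSuppCtx B 0 0
  | cons {P Q : Multiset ℕ} {φ : MForm} {Γ : Multiset MForm} :
      MSupp φ B P → MSuppCtx B Q Γ → MSuppCtx B (P + Q) (φ ::ₘ Γ)

/-- Support of a sequent: `Γ ⊩_B^P φ` (clause (Inf)). -/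
def MSuppInf (Γ : Multiset MForm) (B : MBase) (P : Multiset ℕ) (φ : MForm) : Prop :=
  ∀ X : MBase, B ⊆ X → ∀ U : Multiset ℕ, MSuppCtx X U Γ → MSupp φ X (P + U)

/-- Validity: `Γ ⊩ φ` iff `Γ ⊩_B^∅ φ` for every base `B`. -/
def MValid (Γ : Multiset MForm) (φ : MForm) : Prop :=
  ∀ B : MBase, MSuppInf Γ B 0 φ

/-- The natural deduction system NIMLL: `Γ ⊢ φ`. -/
inductive NIMLL : Multiset MForm → MForm → Prop where
  | ax (φ : MForm) : NIMLL {φ} φ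
  | limpI {Γ : Multiset MForm} {φ ψ : MForm} :
      NIMLL (φ ::ₘ Γ) ψ → NIMLL Γ (.limp φ ψ)
  | limpE {Γ Δ : Multiset MForm} {φ ψ : MForm} :
      NIMLL Γ (.limp φ ψ) → NIMLL Δ φ → NIMLL (Γ + Δ) ψ
  | unitI : NIMLL 0 .unit
  | unitE {Γ Δ : Multiset MForm} {φ : MForm} :
      NIMLL Γ φ → NIMLL Δ .unit → NIMLL (Γ + Δ) φ
  | tensorI {Γ Δ : Multiset MForm} {φ ψ : MForm} :
      NIMLL Γ φ → NIMLL Δ ψ → NIMLL (Γ + Δ) (.tensor φ ψ)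
  | tensorE {Γ Δ : Multiset MForm} {φ ψ χ : MForm} :
      NIMLL Γ (.tensor φ ψ) → NIMLL (φ ::ₘ ψ ::ₘ Δ) χ → NIMLL (Γ + Δ) χ

/-!
Support at a base is determined by its elimination behaviour: `⊩_B^P χ` holds as soon as, for
every extension `X` of `B`, every atomic conclusion `p` that follows from `U ⨾ V` whenever `V`
supports `χ` (in further extensions) already follows from `P ⨾ U`. Since the clause for `φ ⊗ ψ`
is exactly such an elimination principle, a supported tensor can be cut against any `χ` that is
supported once `φ` and `ψ` are, which is ⊗-elimination at a single base; validity then follows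
by splitting the resources of `Γ ⨾ Δ`.
-/

theorem MDer.mono {B X : MBase} (hBX : B ⊆ X) {P : Multiset ℕ} {p : ℕ}
    (h : MDer B P p) : MDer X P p := by
  induction h with
  | ref p => exact .ref p
  | app hr S _ ih => exact .app (hBX hr) S ih

theorem MSupp.mono {φ : MForm} {B X : MBase} (hBX : B ⊆ X) {P : Multiset ℕ}
    (h : MSupp φ B P) : MSupp φ X P := by
  cases φ with
  | atom p => exact MDer.mono hBX h
  | tensor φ ψ => exact fun Y hXY => h Y (hBX.trans hXY)
  | unit => exact fun Y hXY => h Y (hBX.trans hXY)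
  | limp φ ψ => exact fun Y hXY => h Y (hBX.trans hXY)

theorem MSuppCtx.mono {B X : MBase} (hBX : B ⊆ X) {U : Multiset ℕ} {Γ : Multiset MForm}
    (h : MSuppCtx B U Γ) : MSuppCtx X U Γ := by
  induction h with
  | nil => exact .nil
  | cons hφ _ ih => exact .cons (hφ.mono hBX) ih

/-- The clause for `φ ⊗ ψ` is `MSuppElim` applied to the resources splitting into supports of
`φ` and of `ψ`. -/
def MSuppElim (S : MBase → Multiset ℕ → Prop) (B : MBase) (P : Multiset ℕ) : Prop :=
  ∀ X : MBase, B ⊆ X → ∀ (U : Multiset ℕ) (p : ℕ),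
    (∀ Y : MBase, X ⊆ Y → ∀ V : Multiset ℕ, S Y V → MDer Y (U + V) p) → MDer X (P + U) p

theorem MSupp.of_suppElim (χ : MForm) {B : MBase} {P : Multiset ℕ}
    (H : MSuppElim (MSupp χ) B P) : MSupp χ B P := by
  induction χ generalizing B P with
  | atom q =>
    show MDer B P q
    simpa using H B le_rfl 0 q fun Y _ V (hV : MDer Y V q) => by rwa [zero_add]
  | tensor φ ψ =>
    intro X hX U p hc
    refine H X hX U p fun Y hY V hV => ?_
    rw [add_comm]
    exact hV Y le_rfl U p fun Z hZ => hc Z (hY.trans hZ)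
  | unit =>
    intro X hX U p hd
    refine H X hX U p fun Y hY V hV => ?_
    rw [add_comm]
    exact hV Y le_rfl U p (hd.mono hY)
  | limp φ ψ _ ihψ =>
    intro X hX U hφ
    refine ihψ fun Z hZ W q hcont => ?_
    -- eliminate `φ ⊸ ψ` against the argument `U` and feed the resulting `ψ` to `hcont`
    rw [add_assoc]
    refine H Z (hX.trans hZ) (U + W) q fun Y hY V hV => ?_
    have hψ : MSupp ψ Y (V + U) := hV Y le_rfl U (hφ.mono (hZ.trans hY))
    convert hcont Y hY (V + U) hψ using 1
    abel

theorem MSupp.tensor_elim {φ ψ χ : MForm} {X : MBase} {P Q : Multiset ℕ}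
    (ht : MSupp (.tensor φ ψ) X P)
    (hχ : ∀ Y : MBase, X ⊆ Y → ∀ V₁ V₂ : Multiset ℕ,
      MSupp φ Y V₁ → MSupp ψ Y V₂ → MSupp χ Y (V₁ + (V₂ + Q))) :
    MSupp χ X (P + Q) := by
  refine MSupp.of_suppElim χ fun Z hZ W p hcont => ?_
  rw [add_assoc]
  refine ht Z hZ (Q + W) p fun Y hY V ⟨V₁, V₂, hV, hφ, hψ⟩ => ?_
  convert hcont Y hY _ (hχ Y (hZ.trans hY) V₁ V₂ hφ hψ) using 1
  rw [hV]
  abel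

theorem MSuppCtx.exists_of_cons {X : MBase} {U : Multiset ℕ} {C : Multiset MForm}
    (h : MSuppCtx X U C) {a : MForm} {Γ : Multiset MForm} (hC : C = a ::ₘ Γ) :
    ∃ P Q, U = P + Q ∧ MSupp a X P ∧ MSuppCtx X Q Γ := by
  induction h generalizing Γ with
  | nil => exact absurd hC.symm Multiset.cons_ne_zero
  | @cons P Q φ Γ' hφ hΓ' ih =>
    rcases Multiset.cons_eq_cons.mp hC with ⟨rfl, rfl⟩ | ⟨-, Γ'', hΓ'', hΓ⟩
    · exact ⟨P, Q, rfl, hφ, hΓ'⟩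
    · obtain ⟨P', Q', rfl, ha, hΓ''⟩ := ih hΓ''
      exact ⟨P', P + Q', by abel, ha, hΓ ▸ .cons hφ hΓ''⟩

theorem MSuppCtx.exists_of_add {X : MBase} (Γ : Multiset MForm) {Δ : Multiset MForm}
    {U : Multiset ℕ} (h : MSuppCtx X U (Γ + Δ)) :
    ∃ U₁ U₂, U = U₁ + U₂ ∧ MSuppCtx X U₁ Γ ∧ MSuppCtx X U₂ Δ := by
  induction Γ using Multiset.induction generalizing U with
  | empty => exact ⟨0, U, (zero_add U).symm, .nil, by simpa using h⟩
  | cons a Γ ih =>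
    obtain ⟨P, Q, rfl, ha, hQ⟩ := h.exists_of_cons (Multiset.cons_add a Γ Δ)
    obtain ⟨U₁, U₂, rfl, h₁, h₂⟩ := ih hQ
    exact ⟨P + U₁, U₂, (add_assoc ..).symm, .cons ha h₁, h₂⟩

/-- (Validity of ⊗-elimination) If `Γ ⊩ φ ⊗ ψ` and `Δ ⨾ φ ⨾ ψ ⊩ χ`, then
`Γ ⨾ Δ ⊩ χ`. -/
theorem imll_tensor_elim_valid (Γ Δ : Multiset MForm) (φ ψ χ : MForm)
    (h1 : MValid Γ (.tensor φ ψ)) (h2 : MValid (φ ::ₘ ψ ::ₘ Δ) χ) :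
    MValid (Γ + Δ) χ := by
  intro B X hBX U hctx
  obtain ⟨U₁, U₂, rfl, hΓ, hΔ⟩ := hctx.exists_of_add Γ
  have ht := h1 B X hBX U₁ hΓ
  rw [zero_add] at ht ⊢
  refine ht.tensor_elim fun Y hY V₁ V₂ hφ hψ => ?_
  simpa using h2 B Y (hBX.trans hY) _ (.cons hφ (.cons hψ (hΔ.mono hY)))
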